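/- arXiv:math/0507286 — 6 statements merged into one kernel-verified Lean document; each statement's English description precedes it below -/
import Mathlib

section
/- Let A be an integral domain with fraction field K, and let 𝔭 ⊂ A[t] be a nonzero prime ideal with 𝔭 ∩ A = 0. Let 𝔭^e ⊂ K[t] be the ideal generated by 𝔭. Then: (1) 𝔭^e is a prime ideal of K[t]; (2) 𝔭^e ∩ A[t] = 𝔭; (3) there exists f ∈ 𝔭 such that for every monic polynomial p ∈ A[t] with p ∉ 𝔭 one has R(p,f) ≠ 0, where R(p,f) is the resultant (determinant of multiplication by f on A[t]/(p)). -/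
open Polynomial

/-- Localization instance for polynomial rings (port of `MvPolynomial.isLocalization`). -/
theorem Polynomial.isLocalization'' {A : Type*} [CommRing A] (M : Submonoid A)
    (K : Type*) [CommRing K] [Algebra A K] [IsLocalization M K] :
    letI : Algebra A[X] K[X] := (mapRingHom (algebraMap A K)).toAlgebra
    IsLocalization (M.map (C : A →+* A[X])) K[X] := by
  letI : Algebra A[X] K[X] := (mapRingHom (algebraMap A K)).toAlgebra
  have halg : algebraMap A[X] K[X] = mapRingHom (algebraMap A K) := rfl
  rw [isLocalization_iff]
  refine ⟨?_, ?_, ?_⟩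
  · rintro ⟨_, q, hq, rfl⟩
    rw [halg]
    simp only [coe_mapRingHom, map_C]
    exact (IsLocalization.map_units K ⟨q, hq⟩).map (C : K →+* K[X])
  · intro p
    simp only [halg, coe_mapRingHom, Prod.exists, Subtype.exists, Submonoid.mem_map,
      exists_prop, exists_exists_and_eq_and, map_C]
    refine p.induction_on' ?_ ?_
    · intro p p' ⟨x, m, hm, hxm⟩ ⟨x', m', hm', hxm'⟩
      refine ⟨x * C m' + x' * C m, m * m', Submonoid.mul_mem _ hm hm', ?_⟩
      simp only [Polynomial.map_mul, Polynomial.map_add, map_C, map_mul]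
      rw [← hxm, ← hxm']
      ring
    · intro n k
      obtain ⟨⟨r, m⟩, hr⟩ := IsLocalization.surj M k
      refine ⟨Polynomial.monomial n r, m, m.property, ?_⟩
      simp only [map_monomial]
      rw [mul_comm, C_mul_monomial, ← hr, mul_comm]
  · intro p q h
    simp_rw [halg, coe_mapRingHom, Polynomial.ext_iff, coeff_map] at h
    choose c hc using (fun m ↦ IsLocalization.exists_of_eq (M := M) (h m))
    simp only [Subtype.exists, Submonoid.mem_map, exists_prop, exists_exists_and_eq_and]
    classical
    refine ⟨Finset.prod (p.support ∪ q.support) (fun m ↦ c m), ?_, ?_⟩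
    · exact M.prod_mem (fun m _ ↦ (c m).property)
    · ext m
      simp only [coeff_C_mul]
      by_cases h : m ∈ p.support ∪ q.support
      · exact Finset.prod_mul_eq_prod_mul_of_exists m h (hc m)
      · simp only [Finset.mem_union, mem_support_iff, ne_eq, not_or, Decidable.not_not] at h
        rw [h.left, h.right]

/-- An injective endomorphism of a finite free module over a domain has nonzero determinant. -/
theorem det_ne_zero_of_injective' {R M ι : Type*} [CommRing R] [IsDomain R] [AddCommGroup M]
    [Module R M] [Fintype ι] [DecidableEq ι] (b : Module.Basis ι R M) {f : M →ₗ[R] M}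
    (hf : Function.Injective f) : LinearMap.det f ≠ 0 := by
  rw [← LinearMap.det_toMatrix b]
  intro h
  obtain ⟨v, hv, hmul⟩ := (Matrix.exists_mulVec_eq_zero_iff).2 h
  set v' : ι →₀ R := Finsupp.equivFunOnFinite.symm v with hv'
  set x : M := b.repr.symm v' with hx
  have hrepr : ⇑(b.repr x) = v := by
    rw [hx, LinearEquiv.apply_symm_apply]; rfl
  have : ⇑(b.repr (f x)) = 0 := by
    rw [← LinearMap.toMatrix_mulVec_repr b b f x, hrepr, hmul]
  have hfx : f x = 0 := by
    have h0 : b.repr (f x) = 0 := Finsupp.coe_eq_zero.mp this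
    simpa using congrArg b.repr.symm h0
  have hx0 : x = 0 := hf (by simp [hfx])
  apply hv
  have : v' = 0 := by simpa [hx] using congrArg b.repr hx0
  rw [hv'] at this
  exact (Finsupp.equivFunOnFinite.apply_symm_apply v).symm.trans (congrArg (⇑Finsupp.equivFunOnFinite) this)

/-- The resultant `R(p,f)` of two polynomials: the determinant of the `A`-linear map
"multiplication by `f`" on `A[t]/(p)`. -/
noncomputable def polyResultant {A : Type*} [CommRing A] (p f : Polynomial A) : A :=
  LinearMap.det (LinearMap.mulLeft A (AdjoinRoot.mk p f))

/-- Let `A` be an integral domain with fraction field `K` and `𝔭 ⊂ A[t]` a nonzero prime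
ideal with `𝔭 ∩ A = 0`.  Then the extension `𝔭ᵉ ⊂ K[t]` is prime, `𝔭ᵉ ∩ A[t] = 𝔭`, and
there is `f ∈ 𝔭` whose resultant with any monic `p ∉ 𝔭` is nonzero. -/
theorem prime_ideal_extension_fraction_field {A : Type*} [CommRing A] [IsDomain A]
    (𝔭 : Ideal (Polynomial A)) [𝔭.IsPrime] (h𝔭 : 𝔭 ≠ ⊥)
    (h𝔭A : Ideal.comap (Polynomial.C : A →+* Polynomial A) 𝔭 = ⊥) :
    (Ideal.map (Polynomial.mapRingHom (algebraMap A (FractionRing A))) 𝔭).IsPrime ∧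
    Ideal.comap (Polynomial.mapRingHom (algebraMap A (FractionRing A)))
        (Ideal.map (Polynomial.mapRingHom (algebraMap A (FractionRing A))) 𝔭) = 𝔭 ∧
    ∃ f ∈ 𝔭, ∀ p : Polynomial A, p.Monic → p ∉ 𝔭 → polyResultant p f ≠ 0 := by
  classical
  set K := FractionRing A
  letI : Algebra A[X] K[X] := (mapRingHom (algebraMap A K)).toAlgebra
  haveI hloc : IsLocalization ((nonZeroDivisors A).map (C : A →+* A[X])) K[X] :=
    Polynomial.isLocalization'' (nonZeroDivisors A) K
  have halg : algebraMap A[X] K[X] = mapRingHom (algebraMap A K) := rfl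
  set M := (nonZeroDivisors A).map (C : A →+* A[X]) with hM
  set φ := mapRingHom (algebraMap A K) with hφ
  set Q := Ideal.map φ 𝔭 with hQdef
  have hdisj : Disjoint (M : Set A[X]) (𝔭 : Set A[X]) := by
    rw [Set.disjoint_left]
    rintro _ ⟨d, hd, rfl⟩ hmem
    have h0 : d ∈ Ideal.comap (C : A →+* Polynomial A) 𝔭 := hmem
    rw [h𝔭A] at h0
    exact nonZeroDivisors.ne_zero hd (by simpa using h0)
  have hprime : Q.IsPrime := by
    have := IsLocalization.isPrime_of_isPrime_disjoint M K[X] 𝔭 inferInstance hdisj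
    rwa [halg] at this
  have hcomap : Ideal.comap φ Q = 𝔭 := by
    have := IsLocalization.comap_map_of_isPrime_disjoint M K[X] (I := 𝔭) inferInstance hdisj
    rwa [halg] at this
  refine ⟨hprime, hcomap, ?_⟩
  -- choose a generator of the extended ideal
  have hinj : Function.Injective (algebraMap A K) := IsFractionRing.injective A K
  have hQne : Q ≠ ⊥ := by
    intro h
    obtain ⟨x, hx𝔭, hx0⟩ := Submodule.exists_mem_ne_zero_of_ne_bot h𝔭
    have : φ x ∈ Q := Ideal.mem_map_of_mem φ hx𝔭
    rw [h, Ideal.mem_bot] at this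
    exact hx0 (Polynomial.map_injective _ hinj (by simpa [hφ] using this))
  obtain ⟨g0, hg0⟩ := Submodule.IsPrincipal.principal Q
  have hg0ne : g0 ≠ 0 := by
    rintro rfl
    exact hQne (by rw [hg0]; exact Ideal.span_singleton_eq_bot.mpr rfl)
  have hg0prime : Prime g0 := by
    have hsp : Ideal.IsPrime (Submodule.span K[X] ({g0} : Set K[X])) := hg0 ▸ hprime
    exact (Ideal.span_singleton_prime hg0ne).mp hsp
  -- clear denominators
  have hg0mem : g0 ∈ Ideal.map (algebraMap A[X] K[X]) 𝔭 := by
    rw [halg, ← hQdef, hg0]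
    exact Ideal.mem_span_singleton_self g0
  obtain ⟨⟨f', s⟩, hfs⟩ := (IsLocalization.mem_map_algebraMap_iff M K[X]).mp hg0mem
  obtain ⟨u, hu⟩ := IsLocalization.map_units K[X] s
  have hassoc : Associated g0 (φ f') := by
    refine ⟨u, ?_⟩
    rw [halg] at hfs
    rw [hu]
    exact hfs
  have hφfprime : Prime (φ (f' : A[X])) := hassoc.prime hg0prime
  have hQspan : Q = Ideal.span {φ (f' : A[X])} := by
    rw [hg0]
    exact Ideal.span_singleton_eq_span_singleton.mpr hassoc
  refine ⟨f', f'.2, ?_⟩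
  intro p hmonic hp
  have hinjmul : Function.Injective (LinearMap.mulLeft A (AdjoinRoot.mk p (f' : A[X]))) := by
    rw [← LinearMap.ker_eq_bot, Submodule.eq_bot_iff]
    intro x hx
    rw [LinearMap.mem_ker] at hx
    obtain ⟨h, rfl⟩ := AdjoinRoot.mk_surjective x
    rw [LinearMap.mulLeft_apply] at hx
    have hdvd : p ∣ (f' : A[X]) * h := by
      rw [← AdjoinRoot.mk_eq_zero, map_mul]; exact hx
    obtain ⟨q, hq⟩ := hdvd
    have h1 : φ (f' : A[X]) * φ h = φ p * φ q := by
      rw [← map_mul, hq, map_mul]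
    have hnotdvd : ¬ (φ (f' : A[X]) ∣ φ p) := by
      intro hdvd'
      apply hp
      rw [← hcomap]
      exact Ideal.mem_comap.mpr (hQspan ▸ Ideal.mem_span_singleton.mpr hdvd')
    rcases hφfprime.2.2 (φ p) (φ q) ⟨φ h, h1.symm⟩ with h' | h'
    · exact absurd h' hnotdvd
    · obtain ⟨r, hr⟩ := h'
      have hφf0 : φ (f' : A[X]) ≠ 0 := hφfprime.ne_zero
      have h2 : φ h = φ p * r := by
        apply mul_left_cancel₀ hφf0
        rw [h1, hr]; ring
      have hpk : p.map (algebraMap A K) ∣ h.map (algebraMap A K) := by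
        refine ⟨r, ?_⟩
        simpa [hφ, coe_mapRingHom] using h2
      have : p ∣ h := (Polynomial.map_dvd_map _ hinj hmonic).mp hpk
      exact AdjoinRoot.mk_eq_zero.mpr this
  exact det_ne_zero_of_injective' (AdjoinRoot.powerBasis' hmonic).basis hinjmul
end

section
/- Let A be a commutative unital ring, 𝔭 ⊂ A[t] a prime ideal, and 𝔮 = A ∩ 𝔭. If 𝔭 ≠ 𝔮[t] (for instance if 𝔭 is a proper ideal containing a monic polynomial), then there exists f ∈ 𝔭 such that for every monic polynomial p ∈ A[t] with p ∉ 𝔭 one has R(p,f) ∉ 𝔮, where R(p,f) is the resultant. -/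
open Polynomial

lemma polyResultant_mul {A : Type*} [CommRing A] (p f g : A[X]) :
    polyResultant p (f * g) = polyResultant p f * polyResultant p g := by
  unfold polyResultant
  rw [map_mul, LinearMap.mulLeft_mul, LinearMap.det_comp]

lemma polyResultant_isUnit {A : Type*} [CommRing A] (p f : A[X])
    (h : IsUnit (AdjoinRoot.mk p f)) : IsUnit (polyResultant p f) := by
  obtain ⟨u, hu⟩ := h
  obtain ⟨g, hg⟩ := AdjoinRoot.mk_surjective (↑u⁻¹ : AdjoinRoot p)
  have h1 : AdjoinRoot.mk p (f * g) = 1 := by rw [map_mul, ← hu, hg, Units.mul_inv]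
  have h2 : polyResultant p f * polyResultant p g = 1 := by
    rw [← polyResultant_mul]
    unfold polyResultant
    rw [h1, LinearMap.mulLeft_one, LinearMap.det_id]
  exact IsUnit.of_mul_eq_one _ h2

lemma polyResultant_eq_det {A : Type*} [CommRing A] {p : A[X]} (hp : p.Monic) (f : A[X]) :
    polyResultant p f =
      (Matrix.of fun i j : Fin p.natDegree => ((f * X ^ (j : ℕ)) %ₘ p).coeff i).det := by
  unfold polyResultant
  rw [← LinearMap.det_toMatrix (AdjoinRoot.powerBasis' hp).basis]
  congr 1
  ext i j
  rw [LinearMap.toMatrix_apply, LinearMap.mulLeft_apply]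
  change _ = ((f * X ^ (j : ℕ)) %ₘ p).coeff (i : ℕ)
  rw [PowerBasis.coe_basis, AdjoinRoot.powerBasis'_gen]
  beta_reduce
  rw [show (AdjoinRoot.root p) ^ (j : ℕ) = AdjoinRoot.mk p (X ^ (j : ℕ)) by
    rw [map_pow, AdjoinRoot.mk_X]]
  rw [← map_mul]
  exact (AdjoinRoot.powerBasisAux'_repr_apply_to_fun hp _ i).trans
    (by rw [AdjoinRoot.modByMonicHom_mk])

lemma polyResultant_map {A B : Type*} [CommRing A] [CommRing B] [Nontrivial B] (φ : A →+* B)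
    {p : A[X]} (hp : p.Monic) (f : A[X]) :
    φ (polyResultant p f) = polyResultant (p.map φ) (f.map φ) := by
  have hd : (p.map φ).natDegree = p.natDegree := hp.natDegree_map φ
  rw [polyResultant_eq_det hp, polyResultant_eq_det (hp.map φ), RingHom.map_det,
    RingHom.mapMatrix_apply]
  rw [← Matrix.det_submatrix_equiv_self (finCongr hd)
    ((Matrix.of fun i j : Fin p.natDegree => ((f * X ^ (j : ℕ)) %ₘ p).coeff i).map φ)]
  congr 1
  ext i j
  simp only [Matrix.submatrix_apply, Matrix.map_apply, Matrix.of_apply, finCongr_apply,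
    Fin.coe_cast]
  rw [← Polynomial.coeff_map, Polynomial.map_modByMonic _ hp, Polynomial.map_mul,
    Polynomial.map_pow, Polynomial.map_X]

/-- Let `A` be a commutative unital ring, `𝔭 ⊂ A[t]` a prime ideal and `𝔮 = A ∩ 𝔭`.
If `𝔭 ≠ 𝔮[t]` then there exists `f ∈ 𝔭` such that for every monic polynomial `p ∉ 𝔭`
the resultant `R(p,f)` does not belong to `𝔮`. -/
theorem exists_resultant_not_mem {A : Type*} [CommRing A]
    (𝔭 : Ideal (Polynomial A)) [𝔭.IsPrime]
    (h : 𝔭 ≠ Ideal.map (Polynomial.C : A →+* Polynomial A)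
          (Ideal.comap (Polynomial.C : A →+* Polynomial A) 𝔭)) :
    ∃ f ∈ 𝔭, ∀ p : Polynomial A, p.Monic → p ∉ 𝔭 →
      polyResultant p f ∉ Ideal.comap (Polynomial.C : A →+* Polynomial A) 𝔭 := by
  classical
  set 𝔮 : Ideal A := Ideal.comap (C : A →+* A[X]) 𝔭 with h𝔮def
  haveI h𝔮prime : 𝔮.IsPrime := Ideal.IsPrime.comap _
  set B := A ⧸ 𝔮 with hBdef
  set K := FractionRing B with hKdef
  set φ : A →+* K := (algebraMap B K).comp (Ideal.Quotient.mk 𝔮) with hφdef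
  have hφ0 : ∀ a : A, φ a = 0 ↔ a ∈ 𝔮 := by
    intro a
    rw [hφdef, RingHom.comp_apply,
      map_eq_zero_iff (algebraMap B K) (IsFractionRing.injective B K),
      Ideal.Quotient.eq_zero_iff_mem]
  have hle : Ideal.map (C : A →+* A[X]) 𝔮 ≤ 𝔭 := Ideal.map_comap_le
  have hker : ∀ g : A[X], g.map φ = 0 → g ∈ 𝔭 := by
    intro g hg
    apply Ideal.polynomial_mem_ideal_of_coeff_mem_ideal 𝔭 g
    intro n
    rw [← h𝔮def, ← hφ0]
    have := congrArg (fun q => Polynomial.coeff q n) hg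
    simpa [Polynomial.coeff_map] using this
  have hclear : ∀ h : K[X], ∃ c : A, c ∉ 𝔮 ∧ ∃ h₀ : A[X], h₀.map φ = C (φ c) * h := by
    intro h
    obtain ⟨b, hb⟩ := IsLocalization.integerNormalization_map_to_map (nonZeroDivisors B) h
    obtain ⟨c, hc⟩ := Ideal.Quotient.mk_surjective (b : B)
    obtain ⟨h₀, hh₀⟩ := Polynomial.map_surjective _ Ideal.Quotient.mk_surjective
        (IsLocalization.integerNormalization (nonZeroDivisors B) h)
    refine ⟨c, ?_, h₀, ?_⟩
    · intro hcq
      have hb0 : (b : B) = 0 := by rw [← hc, Ideal.Quotient.eq_zero_iff_mem]; exact hcq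
      exact nonZeroDivisors.coe_ne_zero b hb0
    · have h1 : h₀.map φ = (h₀.map (Ideal.Quotient.mk 𝔮)).map (algebraMap B K) := by
        rw [Polynomial.map_map]
      rw [h1, hh₀, hb, ← hc]
      rw [show ((Ideal.Quotient.mk 𝔮 c : B) • h)
            = (algebraMap B K (Ideal.Quotient.mk 𝔮 c)) • h from (algebraMap_smul K _ _).symm,
        Polynomial.smul_eq_C_mul]
      rfl
  -- there exists f in 𝔭 with nonzero image
  obtain ⟨f₁, hf₁p, hf₁⟩ : ∃ g ∈ 𝔭, g.map φ ≠ 0 := by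
    by_contra hcon
    push_neg at hcon
    apply h
    refine le_antisymm ?_ hle
    intro g hg
    rw [Ideal.mem_map_C_iff]
    intro n
    have h0 := hcon g hg
    have := congrArg (fun q => Polynomial.coeff q n) h0
    rw [← hφ0]
    simpa [Polynomial.coeff_map] using this
  -- choose f of minimal degree among those
  set S : Set ℕ := {n | ∃ g ∈ 𝔭, g.map φ ≠ 0 ∧ (g.map φ).natDegree = n} with hSdef
  have hS : S.Nonempty := ⟨_, f₁, hf₁p, hf₁, rfl⟩
  obtain ⟨f, hfp, hf0, hfdeg⟩ : ∃ g ∈ 𝔭, g.map φ ≠ 0 ∧ (g.map φ).natDegree = sInf S :=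
    Nat.sInf_mem hS
  have hmin : ∀ g ∈ 𝔭, g.map φ ≠ 0 → (f.map φ).natDegree ≤ (g.map φ).natDegree := by
    intro g hg hg0
    rw [hfdeg]
    exact Nat.sInf_le ⟨g, hg, hg0, rfl⟩
  set fb : K[X] := f.map φ with hfbdef
  -- divisibility claim
  have hdvd : ∀ g ∈ 𝔭, fb ∣ g.map φ := by
    intro g hg
    have hm : (fb * C fb.leadingCoeff⁻¹).Monic := monic_mul_leadingCoeff_inv hf0
    obtain ⟨q, r, heq, hr⟩ : ∃ q r : K[X], g.map φ = fb * q + r ∧ r.degree < fb.degree := by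
      refine ⟨C fb.leadingCoeff⁻¹ * ((g.map φ) /ₘ (fb * C fb.leadingCoeff⁻¹)),
        (g.map φ) %ₘ (fb * C fb.leadingCoeff⁻¹), ?_, ?_⟩
      · conv_lhs => rw [← modByMonic_add_div (g.map φ) (fb * C fb.leadingCoeff⁻¹)]
        ring
      · rw [← degree_mul_leadingCoeff_inv fb hf0]
        exact degree_modByMonic_lt _ hm
    obtain ⟨c, hc, q₀, hq₀⟩ := hclear q
    have hcφ : φ c ≠ 0 := fun h0 => hc ((hφ0 c).1 h0)
    have hh'p : C c * g - q₀ * f ∈ 𝔭 :=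
      Ideal.sub_mem _ (Ideal.mul_mem_left _ _ hg) (Ideal.mul_mem_left _ q₀ hfp)
    have hh'map : (C c * g - q₀ * f).map φ = C (φ c) * r := by
      rw [Polynomial.map_sub, Polynomial.map_mul, Polynomial.map_mul, Polynomial.map_C, hq₀,
        ← hfbdef, heq]
      ring
    have hr0 : r = 0 := by
      by_contra hr0
      have hne : (C c * g - q₀ * f).map φ ≠ 0 := by
        rw [hh'map]
        exact mul_ne_zero (C_ne_zero.mpr hcφ) hr0
      have h1 := hmin _ hh'p hne
      rw [hh'map, natDegree_C_mul hcφ] at h1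
      have h3 : r.natDegree < fb.natDegree := natDegree_lt_natDegree hr0 hr
      omega
    rw [heq, hr0, add_zero]
    exact dvd_mul_right fb q
  -- fb is not a unit
  have hfb_nonunit : ¬ IsUnit fb := by
    intro hu
    have hdeg : fb.natDegree = 0 := natDegree_eq_zero_of_isUnit hu
    have hconst : fb = C (fb.coeff 0) := eq_C_of_natDegree_eq_zero hdeg
    have hmap0 : (f - C (f.coeff 0)).map φ = 0 := by
      rw [Polynomial.map_sub, Polynomial.map_C]
      have h1 : φ (f.coeff 0) = fb.coeff 0 := by rw [hfbdef, Polynomial.coeff_map]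
      rw [h1, ← hfbdef, ← hconst, sub_self]
    have h1 : f - C (f.coeff 0) ∈ 𝔭 := hker _ hmap0
    have h2 : C (f.coeff 0) ∈ 𝔭 := by
      have h3 := Ideal.sub_mem 𝔭 hfp h1
      simpa using h3
    have h3 : f.coeff 0 ∈ 𝔮 := by rw [h𝔮def]; exact Ideal.mem_comap.mpr h2
    have h4 : φ (f.coeff 0) = 0 := (hφ0 _).2 h3
    apply hf0
    rw [hconst, show fb.coeff 0 = φ (f.coeff 0) from by rw [hfbdef, Polynomial.coeff_map],
      h4, map_zero]
  have hdegpos : ∀ w : K[X], w ≠ 0 → ¬ IsUnit w → 0 < w.natDegree := by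
    intro w hw0 hwu
    rcases Nat.eq_zero_or_pos w.natDegree with h0 | hpos
    · exfalso
      apply hwu
      have hc0 : w.coeff 0 ≠ 0 := by
        intro hc
        apply hw0
        rw [eq_C_of_natDegree_eq_zero h0, hc, map_zero]
      rw [eq_C_of_natDegree_eq_zero h0]
      exact isUnit_C.mpr (isUnit_iff_ne_zero.mpr hc0)
    · exact hpos
  have hdvd_deg : ∀ (w₀ : A[X]) (w : K[X]) (cw : A), cw ∉ 𝔮 → w₀.map φ = C (φ cw) * w →
      w₀ ∈ 𝔭 → w ≠ 0 → fb.natDegree ≤ w.natDegree := by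
    intro w₀ w cw hcw hmap hwp hw0
    have hcφ : φ cw ≠ 0 := fun h0 => hcw ((hφ0 cw).1 h0)
    have hdv : fb ∣ C (φ cw) * w := hmap ▸ hdvd _ hwp
    obtain ⟨e, he⟩ := hdv
    have h2 := congrArg (fun x => C (φ cw)⁻¹ * x) he
    rw [← mul_assoc, ← C_mul, inv_mul_cancel₀ hcφ, C_1, one_mul] at h2
    have hwdvd : fb ∣ w := ⟨C (φ cw)⁻¹ * e, by rw [h2]; ring⟩
    exact natDegree_le_of_dvd hwdvd hw0
  have hirr : Irreducible fb := by
    refine ⟨hfb_nonunit, fun u v huv => ?_⟩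
    by_contra hcon
    push_neg at hcon
    obtain ⟨hu, hv⟩ := hcon
    have hu0 : u ≠ 0 := by rintro rfl; rw [zero_mul] at huv; exact hf0 huv
    have hv0 : v ≠ 0 := by rintro rfl; rw [mul_zero] at huv; exact hf0 huv
    obtain ⟨cu, hcu, u₀, hu₀⟩ := hclear u
    obtain ⟨cv, hcv, v₀, hv₀⟩ := hclear v
    have hw : (C (cu * cv) * f - u₀ * v₀).map φ = 0 := by
      rw [Polynomial.map_sub, Polynomial.map_mul, Polynomial.map_mul, Polynomial.map_C, hu₀,
        hv₀, ← hfbdef, huv, map_mul]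
      rw [C_mul]
      ring
    have hw𝔭 := hker _ hw
    have huvp : u₀ * v₀ ∈ 𝔭 := by
      have h1 : C (cu * cv) * f ∈ 𝔭 := Ideal.mul_mem_left _ _ hfp
      have h2 := Ideal.sub_mem 𝔭 h1 hw𝔭
      simpa using h2
    have hdeg : fb.natDegree = u.natDegree + v.natDegree := by
      rw [huv, natDegree_mul hu0 hv0]
    rcases ‹𝔭.IsPrime›.mem_or_mem huvp with hup | hvp
    · have h1 := hdvd_deg u₀ u cu hcu hu₀ hup hu0
      have h2 := hdegpos v hv0 hv
      omega
    · have h1 := hdvd_deg v₀ v cv hcv hv₀ hvp hv0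
      have h2 := hdegpos u hu0 hu
      omega
  -- conclusion
  refine ⟨f, hfp, ?_⟩
  intro p hpm hpp hmem
  have hres0 : φ (polyResultant p f) = 0 := (hφ0 _).2 hmem
  rw [polyResultant_map φ hpm, ← hfbdef] at hres0
  have hnd : ¬ fb ∣ p.map φ := by
    rintro ⟨e, he⟩
    obtain ⟨c, hc, h₀, hh₀⟩ := hclear e
    have hmap0 : (C c * p - f * h₀).map φ = 0 := by
      rw [Polynomial.map_sub, Polynomial.map_mul, Polynomial.map_mul, Polynomial.map_C, hh₀,
        ← hfbdef, he]
      ring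
    have h1 := hker _ hmap0
    have h2 : C c * p ∈ 𝔭 := by
      have h3 : f * h₀ ∈ 𝔭 := Ideal.mul_mem_right _ _ hfp
      have h4 := Ideal.add_mem 𝔭 h1 h3
      simpa using h4
    rcases ‹𝔭.IsPrime›.mem_or_mem h2 with h5 | h5
    · exact hc (by rw [h𝔮def]; exact Ideal.mem_comap.mpr h5)
    · exact hpp h5
  have hcop : IsCoprime (p.map φ) fb := (hirr.coprime_iff_not_dvd.mpr hnd).symm
  obtain ⟨a, b, hab⟩ := hcop
  have hunit : IsUnit (AdjoinRoot.mk (p.map φ) fb) := by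
    refine IsUnit.of_mul_eq_one (AdjoinRoot.mk (p.map φ) b) ?_
    rw [← map_mul, mul_comm, show b * fb = 1 - a * p.map φ by rw [← hab]; ring,
      map_sub, map_one, map_mul, AdjoinRoot.mk_self, mul_zero, sub_zero]
  have h7 := polyResultant_isUnit _ _ hunit
  rw [hres0] at h7
  exact not_isUnit_zero h7
end

section
/- Let K be a field, R = K[[x₁,…,xₙ]] the ring of formal power series, and view R[t] as a subring of K[[x₁,…,xₙ,t]] (equivalently R[[t]]). Let g ∈ R[t] be a Weierstrass polynomial in t, i.e. g = t^s + Σ_{i=1}^{s} g_i(x)·t^{s-i} with each g_i in the maximal ideal of R (g_i(0) = 0). If f ∈ R[t] is a polynomial in t and f = h·g for some h ∈ K[[x₁,…,xₙ,t]], then h belongs to R[t], i.e. h is a polynomial in t with power series coefficients, of degree ≤ deg_t f − s. -/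
open Polynomial Finset

/-- Degree (sum of exponents) of a finitely supported function. -/
private def wdeg {n : ℕ} (d : Fin n →₀ ℕ) : ℕ := d.sum fun _ v => v

private lemma wdeg_add {n : ℕ} (a b : Fin n →₀ ℕ) : wdeg (a + b) = wdeg a + wdeg b :=
  Finsupp.sum_add_index' (fun _ => rfl) (fun _ _ _ => rfl)

private lemma wdeg_pos {n : ℕ} {a : Fin n →₀ ℕ} (ha : a ≠ 0) : 0 < wdeg a := by
  obtain ⟨i, hi⟩ : ∃ i, a i ≠ 0 := by
    by_contra hc
    push_neg at hc
    exact ha (Finsupp.ext fun i => hc i)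
  have hmem : i ∈ a.support := Finsupp.mem_support_iff.mpr hi
  calc 0 < a i := Nat.pos_of_ne_zero hi
    _ ≤ wdeg a := Finset.single_le_sum (fun _ _ => Nat.zero_le _) hmem

/-- Key lemma: if `e * g` has vanishing coefficients in all degrees `≥ s` (in `t`),
with `g` a Weierstrass polynomial of degree `s`, then `e = 0`. -/
private lemma wd_key {K : Type*} [Field K] {n s : ℕ}
    (g : Polynomial (MvPowerSeries (Fin n) K))
    (hg_monic : g.Monic) (hg_deg : g.natDegree = s)
    (hg_weier : ∀ i < s, MvPowerSeries.constantCoeff (g.coeff i) = 0)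
    (e : PowerSeries (MvPowerSeries (Fin n) K))
    (he : ∀ m : ℕ, PowerSeries.coeff (m + s) (e * (g : PowerSeries (MvPowerSeries (Fin n) K))) = 0) :
    e = 0 := by
  -- the recurrence
  have hrec : ∀ k : ℕ, PowerSeries.coeff k e =
      - ∑ j ∈ Finset.range s, g.coeff j * PowerSeries.coeff (k + s - j) e := by
    intro k
    have h0 := he k
    rw [mul_comm, PowerSeries.coeff_mul,
      Finset.Nat.sum_antidiagonal_eq_sum_range_succ
        (fun i j => (PowerSeries.coeff i (g : PowerSeries (MvPowerSeries (Fin n) K))) *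
          PowerSeries.coeff j e)] at h0
    have hsub : ∑ j ∈ Finset.range (k + s + 1),
        (PowerSeries.coeff j (g : PowerSeries (MvPowerSeries (Fin n) K))) *
          PowerSeries.coeff (k + s - j) e
        = ∑ j ∈ Finset.range (s + 1),
        (PowerSeries.coeff j (g : PowerSeries (MvPowerSeries (Fin n) K))) *
          PowerSeries.coeff (k + s - j) e := by
      refine (Finset.sum_subset ?_ ?_).symm
      · intro j hj
        simp only [Finset.mem_range] at hj ⊢
        omega
      · intro j hj hj'
        simp only [Finset.mem_range] at hj hj'
        have : g.coeff j = 0 := Polynomial.coeff_eq_zero_of_natDegree_lt (by omega)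
        rw [Polynomial.coeff_coe, this, zero_mul]
    rw [hsub, Finset.sum_range_succ] at h0
    have hgs : g.coeff s = 1 := by
      rw [← hg_deg]; exact hg_monic.coeff_natDegree
    rw [Polynomial.coeff_coe, hgs, one_mul, Nat.add_sub_cancel] at h0
    simp only [Polynomial.coeff_coe] at h0 ⊢
    linear_combination h0
  -- the induction on total degree
  have main : ∀ w : ℕ, ∀ d : Fin n →₀ ℕ, wdeg d < w →
      ∀ k : ℕ, MvPowerSeries.coeff d (PowerSeries.coeff k e) = 0 := by
    intro w
    induction w with
    | zero => intro d hd; omega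
    | succ w ih =>
      intro d hd k
      rw [hrec k, map_neg, map_sum, neg_eq_zero]
      refine Finset.sum_eq_zero fun j hj => ?_
      simp only [Finset.mem_range] at hj
      classical
      rw [MvPowerSeries.coeff_mul]
      refine Finset.sum_eq_zero fun p hp => ?_
      replace hp : p.1 + p.2 = d := by simpa using hp
      by_cases hp1 : p.1 = 0
      · have : MvPowerSeries.coeff p.1 (g.coeff j) = 0 := by
          rw [hp1]
          simpa [MvPowerSeries.coeff_zero_eq_constantCoeff] using hg_weier j hj
        rw [this, zero_mul]
      · have hlt : wdeg p.2 < w := by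
          have := wdeg_add p.1 p.2
          rw [hp] at this
          have := wdeg_pos hp1
          omega
        rw [ih p.2 hlt, mul_zero]
  ext k d
  · exact main (wdeg d + 1) d (Nat.lt_succ_self _) k

/-- If `g ∈ R[t]` (with `R = K[[x₁,…,xₙ]]`) is a Weierstrass polynomial of degree `s` in `t`
and `f ∈ R[t]` satisfies `f = h·g` for a power series `h ∈ R[[t]] = K[[x₁,…,xₙ,t]]`, then `h`
is itself a polynomial in `t`, of degree at most `deg f − s`. -/
theorem weierstrass_division_polynomial {K : Type*} [Field K] (n : ℕ) (s : ℕ)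
    (g f : Polynomial (MvPowerSeries (Fin n) K))
    (hg_monic : g.Monic) (hg_deg : g.natDegree = s)
    (hg_weier : ∀ i < s, MvPowerSeries.constantCoeff (g.coeff i) = 0)
    (h : PowerSeries (MvPowerSeries (Fin n) K))
    (hfh : (f : PowerSeries (MvPowerSeries (Fin n) K)) =
      h * (g : PowerSeries (MvPowerSeries (Fin n) K))) :
    ∃ H : Polynomial (MvPowerSeries (Fin n) K),
      (H : PowerSeries (MvPowerSeries (Fin n) K)) = h ∧ H.natDegree ≤ f.natDegree - s := by
  set q := f /ₘ g with hq
  set r := f %ₘ g with hr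
  have hdiv : r + g * q = f := Polynomial.modByMonic_add_div f g
  have hrdeg : r.degree < g.degree := Polynomial.degree_modByMonic_lt f hg_monic
  -- coefficients of (h - q) * g vanish in degrees ≥ s
  have he : ∀ m : ℕ, PowerSeries.coeff (m + s)
      ((h - (q : PowerSeries (MvPowerSeries (Fin n) K))) *
        (g : PowerSeries (MvPowerSeries (Fin n) K))) = 0 := by
    intro m
    have hcast : (h - (q : PowerSeries (MvPowerSeries (Fin n) K))) *
        (g : PowerSeries (MvPowerSeries (Fin n) K)) =
        (r : PowerSeries (MvPowerSeries (Fin n) K)) := by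
      have : (f : PowerSeries (MvPowerSeries (Fin n) K)) =
          (r : PowerSeries (MvPowerSeries (Fin n) K)) +
          (g : PowerSeries (MvPowerSeries (Fin n) K)) *
          (q : PowerSeries (MvPowerSeries (Fin n) K)) := by
        rw [← Polynomial.coe_mul, ← Polynomial.coe_add, hdiv]
      rw [sub_mul, ← hfh, this]
      ring
    rw [hcast, Polynomial.coeff_coe]
    refine Polynomial.coeff_eq_zero_of_degree_lt ?_
    calc r.degree < g.degree := hrdeg
      _ ≤ (s : WithBot ℕ) := by
        rw [Polynomial.degree_eq_natDegree hg_monic.ne_zero, hg_deg]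
      _ ≤ ((m + s : ℕ) : WithBot ℕ) := by
        exact_mod_cast Nat.le_add_left s m
  have hzero : h - (q : PowerSeries (MvPowerSeries (Fin n) K)) = 0 :=
    wd_key g hg_monic hg_deg hg_weier _ he
  refine ⟨q, by linear_combination -hzero, ?_⟩
  rw [hq, Polynomial.natDegree_divByMonic f hg_monic, hg_deg]
end

section
/- Let (L^{•,•}, d, δ) be a double complex of vector spaces: d has bidegree (1,0), δ has bidegree (0,1), d² = 0, δ² = 0, and dδ + δd = 0. Suppose there exists a linear operator σ : L^{•,•} → L^{•,•−1} of bidegree (0,−1) such that dσ + σd = 0 and (δσ + σδ)∘d = d. Then Im(dδ) = ker δ ∩ Im d. -/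
namespace LinearMap

variable {R M : Type*} [Semiring R] [AddCommGroup M] [Module R M]

theorem apply_apply_eq_neg_of_comp_add_comp_eq_zero {f g : M →ₗ[R] M}
    (h : f ∘ₗ g + g ∘ₗ f = 0) (x : M) : f (g x) = -g (f x) :=
  eq_neg_of_add_eq_zero_left (LinearMap.congr_fun h x)

theorem range_comp_le_ker_inf_range {d δ : M →ₗ[R] M} (hδ2 : δ ∘ₗ δ = 0)
    (hanti : d ∘ₗ δ + δ ∘ₗ d = 0) : range (d ∘ₗ δ) ≤ ker δ ⊓ range d := by
  rintro _ ⟨y, rfl⟩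
  refine ⟨?_, δ y, rfl⟩
  have hδδ : δ (δ y) = 0 := LinearMap.congr_fun hδ2 y
  have h := apply_apply_eq_neg_of_comp_add_comp_eq_zero hanti (δ y)
  rw [hδδ, map_zero, zero_eq_neg] at h
  exact h

theorem ker_inf_range_le_range_comp {d δ σ : M →ₗ[R] M} (hanti : d ∘ₗ δ + δ ∘ₗ d = 0)
    (hσd : d ∘ₗ σ + σ ∘ₗ d = 0) (hkey : (δ ∘ₗ σ + σ ∘ₗ δ) ∘ₗ d = d) :
    ker δ ⊓ range d ≤ range (d ∘ₗ δ) := by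
  rintro _ ⟨hx, α, rfl⟩
  refine ⟨σ α, ?_⟩
  have hδx : δ (d α) = 0 := hx
  calc d (δ (σ α)) = -δ (d (σ α)) := apply_apply_eq_neg_of_comp_add_comp_eq_zero hanti _
    _ = δ (σ (d α)) := by rw [apply_apply_eq_neg_of_comp_add_comp_eq_zero hσd, map_neg, neg_neg]
    _ = δ (σ (d α)) + σ (δ (d α)) := by rw [hδx, map_zero, add_zero]
    _ = d α := LinearMap.congr_fun hkey α

end LinearMap

theorem del_delbar_lemma_general {K M : Type*} [Field K] [AddCommGroup M] [Module K M]
    (d δ σ : M →ₗ[K] M)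
    (hδ2 : δ ∘ₗ δ = 0)
    (hanti : d ∘ₗ δ + δ ∘ₗ d = 0)
    (hσd : d ∘ₗ σ + σ ∘ₗ d = 0)
    (hkey : (δ ∘ₗ σ + σ ∘ₗ δ) ∘ₗ d = d) :
    LinearMap.range (d ∘ₗ δ) = LinearMap.ker δ ⊓ LinearMap.range d :=
  le_antisymm (LinearMap.range_comp_le_ker_inf_range hδ2 hanti)
    (LinearMap.ker_inf_range_le_range_comp hanti hσd hkey)

/-- Abstract `∂∂̄`-lemma for a double complex: if there is an operator `σ` of bidegree
`(0,−1)` with `dσ + σd = 0` and `(δσ + σδ)d = d`, then `Im(dδ) = ker δ ∩ Im d`. -/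
theorem del_delbar_lemma {K M : Type*} [Field K] [AddCommGroup M] [Module K M]
    (𝒜 : ℤ → ℤ → Submodule K M)
    (hInternal : DirectSum.IsInternal (fun p : ℤ × ℤ => 𝒜 p.1 p.2))
    (d δ σ : M →ₗ[K] M)
    (hd_mem : ∀ (a b : ℤ), ∀ x ∈ 𝒜 a b, d x ∈ 𝒜 (a + 1) b)
    (hδ_mem : ∀ (a b : ℤ), ∀ x ∈ 𝒜 a b, δ x ∈ 𝒜 a (b + 1))
    (hσ_mem : ∀ (a b : ℤ), ∀ x ∈ 𝒜 a b, σ x ∈ 𝒜 a (b - 1))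
    (hd2 : d ∘ₗ d = 0) (hδ2 : δ ∘ₗ δ = 0)
    (hanti : d ∘ₗ δ + δ ∘ₗ d = 0)
    (hσd : d ∘ₗ σ + σ ∘ₗ d = 0)
    (hkey : (δ ∘ₗ σ + σ ∘ₗ δ) ∘ₗ d = d) :
    LinearMap.range (d ∘ₗ δ) = LinearMap.ker δ ⊓ LinearMap.range d :=
  del_delbar_lemma_general d δ σ hδ2 hanti hσd hkey
end

section
/- Let E be a finite-dimensional vector space of dimension n over a field K, with dual E*. Denote by ⊣ the contraction pairing Λᵃ E × Λᵇ E* → Λ^{b−a} E* (for a ≤ b) determined by extending the single-vector contraction, and analogously Λᵃ E* × Λᵇ E → Λ^{b−a} E. Then for every v ∈ Λᵃ E*, w ∈ Λᵇ E, and Ω ∈ Λⁿ E* with a ≤ b: v ∧ (w ⊣ Ω) = (v ⊣ w) ⊣ Ω, where on the left w ⊣ Ω ∈ Λ^{n−b} E*, and on the right v ⊣ w ∈ Λ^{b−a} E is contracted into Ω producing an element of Λ^{n−b+a} E*. -/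
section Contractions

variable (K E : Type*) [Field K] [AddCommGroup E] [Module K E]

/-- Contraction of the exterior algebra of the dual by a vector `v ∈ E`. -/
noncomputable def contractByVec :
    E →ₗ[K] Module.End K (ExteriorAlgebra K (Module.Dual K E)) :=
  (CliffordAlgebra.contractLeft
    (Q := (0 : QuadraticForm K (Module.Dual K E)))).comp (Module.Dual.eval K E)

theorem contractByVec_sq (v : E) : contractByVec K E v * contractByVec K E v = 0 :=
  LinearMap.ext fun x => CliffordAlgebra.contractLeft_contractLeft _ x

/-- Contraction of the exterior algebra of `E` by a covector `ξ ∈ E*`. -/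
noncomputable def contractByDual :
    Module.Dual K E →ₗ[K] Module.End K (ExteriorAlgebra K E) :=
  CliffordAlgebra.contractLeft (Q := (0 : QuadraticForm K E))

theorem contractByDual_sq (ξ : Module.Dual K E) :
    contractByDual K E ξ * contractByDual K E ξ = 0 :=
  LinearMap.ext fun x => CliffordAlgebra.contractLeft_contractLeft _ x

/-- The contraction `w ⊣ (·) : Λ E* → Λ E*` by an element `w` of `Λ E`, as an algebra map
`Λ E → End(Λ E*)` extending the single-vector contraction (so that
`(v ∧ w) ⊣ z = v ⊣ (w ⊣ z)`). -/
noncomputable def extContract :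
    ExteriorAlgebra K E →ₐ[K] Module.End K (ExteriorAlgebra K (Module.Dual K E)) :=
  ExteriorAlgebra.lift K ⟨contractByVec K E, contractByVec_sq K E⟩

/-- The contraction `ξ ⊣ (·) : Λ E → Λ E` by an element `ξ` of `Λ E*`, as an algebra map
`Λ E* → End(Λ E)`. -/
noncomputable def extContractDual :
    ExteriorAlgebra K (Module.Dual K E) →ₐ[K] Module.End K (ExteriorAlgebra K E) :=
  ExteriorAlgebra.lift K ⟨contractByDual K E, contractByDual_sq K E⟩

end Contractions

/-! For a covector `ξ`, contraction `ξ ⊣ ·` is a super-derivation of `Λ E`; dually, wedging with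
`ξ` on `Λ E*` satisfies `ξ ∧ (x ⊣ Z) = (ξ ⊣ x) ⊣ Z + x̂ ⊣ (ξ ∧ Z)`, with `x̂` the grade
involution of `x`. A top-degree form `Ω` has `ξ ∧ Ω = 0`, which gives the identity for `v = ξ`.
Since `(v₁ ∧ v₂) ⊣ w = v₁ ⊣ (v₂ ⊣ w)`, both sides are multiplicative in `v`, so the identity
extends from covectors to all of `Λ E*`. -/

namespace ExteriorAlgebra

variable {K M : Type*} [Field K] [AddCommGroup M] [Module K M] [FiniteDimensional K M]

theorem exteriorPower_eq_bot_of_finrank_lt {n : ℕ} (h : Module.finrank K M < n) :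
    ⋀[K]^n M = ⊥ :=
  Submodule.finrank_eq_zero.mp <| by rw [exteriorPower.finrank_eq, Nat.choose_eq_zero_of_lt h]

theorem ι_mul_eq_zero_of_mem_exteriorPower_finrank (m : M) {Ω : ExteriorAlgebra K M}
    (hΩ : Ω ∈ ⋀[K]^(Module.finrank K M) M) : ι K m * Ω = 0 := by
  have hmem : ι K m * Ω ∈ ⋀[K]^(1 + Module.finrank K M) M :=
    SetLike.mul_mem_graded (by simp) hΩ
  rwa [exteriorPower_eq_bot_of_finrank_lt (by omega), Submodule.mem_bot] at hmem

end ExteriorAlgebra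

namespace CliffordAlgebra

variable {R M : Type*} [CommRing R] [AddCommGroup M] [Module R M] {Q : QuadraticForm R M}

theorem contractLeft_mul (d : Module.Dual R M) (x y : CliffordAlgebra Q) :
    contractLeft d (x * y) = contractLeft d x * y + involute x * contractLeft d y := by
  induction x using CliffordAlgebra.induction generalizing y with
  | algebraMap r =>
    rw [contractLeft_algebraMap_mul, contractLeft_algebraMap, zero_mul, zero_add,
      AlgHom.commutes]
  | ι u =>
    rw [contractLeft_ι_mul, contractLeft_ι, involute_ι, neg_mul, Algebra.smul_def,
      sub_eq_add_neg]
  | mul x₁ x₂ h₁ h₂ =>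
    rw [mul_assoc, h₁, h₂, h₁, map_mul]
    noncomm_ring
  | add x₁ x₂ h₁ h₂ =>
    simp only [add_mul, map_add, h₁, h₂]
    abel

end CliffordAlgebra

section Contractions

open CliffordAlgebra

variable {K E : Type*} [Field K] [AddCommGroup E] [Module K E]

theorem extContract_ι (u : E) :
    extContract K E (ExteriorAlgebra.ι K u) = contractLeft (Module.Dual.eval K E u) :=
  ExteriorAlgebra.lift_ι_apply _ _ _ u

theorem extContractDual_ι (ξ : Module.Dual K E) :
    extContractDual K E (ExteriorAlgebra.ι K ξ) = contractLeft ξ :=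
  ExteriorAlgebra.lift_ι_apply _ _ _ ξ

theorem extContract_algebraMap (r : K) (Z : ExteriorAlgebra K (Module.Dual K E)) :
    extContract K E (algebraMap K _ r) Z = r • Z := by
  rw [AlgHom.commutes, Module.algebraMap_end_apply]

theorem extContractDual_algebraMap (r : K) (w : ExteriorAlgebra K E) :
    extContractDual K E (algebraMap K _ r) w = r • w := by
  rw [AlgHom.commutes, Module.algebraMap_end_apply]

theorem ι_mul_extContract (ξ : Module.Dual K E) (x : ExteriorAlgebra K E)
    (Z : ExteriorAlgebra K (Module.Dual K E)) :
    ExteriorAlgebra.ι K ξ * extContract K E x Z =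
      extContract K E (contractLeft ξ x) Z +
        extContract K E (involute x) (ExteriorAlgebra.ι K ξ * Z) := by
  induction x using CliffordAlgebra.induction generalizing Z with
  | algebraMap r =>
    rw [contractLeft_algebraMap, map_zero, LinearMap.zero_apply, zero_add,
      AlgHom.commutes involute, extContract_algebraMap, extContract_algebraMap, mul_smul_comm]
  | ι u =>
    rw [extContract_ι, contractLeft_ι, involute_ι, map_neg, LinearMap.neg_apply,
      extContract_ι, extContract_algebraMap, contractLeft_ι_mul, Module.Dual.eval_apply]
    abel
  | mul x₁ x₂ h₁ h₂ =>
    simp only [map_mul, Module.End.mul_apply, h₁, h₂, contractLeft_mul, map_add,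
      LinearMap.add_apply]
    abel
  | add x₁ x₂ h₁ h₂ =>
    simp only [map_add, LinearMap.add_apply, mul_add, h₁, h₂]
    abel

theorem mul_extContract_of_forall_ι_mul_eq_zero {Ω : ExteriorAlgebra K (Module.Dual K E)}
    (hΩ : ∀ ξ, ExteriorAlgebra.ι K ξ * Ω = 0) (v : ExteriorAlgebra K (Module.Dual K E))
    (w : ExteriorAlgebra K E) :
    v * extContract K E w Ω = extContract K E (extContractDual K E v w) Ω := by
  induction v using CliffordAlgebra.induction generalizing w with
  | algebraMap r =>
    rw [extContractDual_algebraMap, map_smul, LinearMap.smul_apply, Algebra.smul_def]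
  | ι ξ =>
    rw [extContractDual_ι, ι_mul_extContract, hΩ, map_zero, add_zero]
  | mul v₁ v₂ h₁ h₂ =>
    rw [mul_assoc, h₂, h₁, map_mul, Module.End.mul_apply]
  | add v₁ v₂ h₁ h₂ =>
    rw [add_mul, h₁, h₂, map_add, LinearMap.add_apply, map_add, LinearMap.add_apply]

end Contractions

theorem wedge_contract_eq_contract_contract_general {K E : Type*} [Field K] [AddCommGroup E]
    [Module K E] [FiniteDimensional K E]
    (v : ExteriorAlgebra K (Module.Dual K E))
    (w : ExteriorAlgebra K E)
    (Ω : ExteriorAlgebra K (Module.Dual K E))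
    (hΩ : Ω ∈ ⋀[K]^(Module.finrank K E) (Module.Dual K E)) :
    v * extContract K E w Ω = extContract K E (extContractDual K E v w) Ω := by
  rw [← Subspace.dual_finrank_eq] at hΩ
  exact mul_extContract_of_forall_ι_mul_eq_zero
    (fun ξ => ExteriorAlgebra.ι_mul_eq_zero_of_mem_exteriorPower_finrank ξ hΩ) v w

/-- For `v ∈ Λᵃ E*`, `w ∈ Λᵇ E`, `Ω ∈ Λⁿ E*` with `a ≤ b` and `n = dim E`:
`v ∧ (w ⊣ Ω) = (v ⊣ w) ⊣ Ω`. -/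
theorem wedge_contract_eq_contract_contract {K E : Type*} [Field K] [AddCommGroup E]
    [Module K E] [FiniteDimensional K E] (a b : ℕ) (hab : a ≤ b)
    (v : ExteriorAlgebra K (Module.Dual K E)) (hv : v ∈ ⋀[K]^a (Module.Dual K E))
    (w : ExteriorAlgebra K E) (hw : w ∈ ⋀[K]^b E)
    (Ω : ExteriorAlgebra K (Module.Dual K E))
    (hΩ : Ω ∈ ⋀[K]^(Module.finrank K E) (Module.Dual K E)) :
    v * extContract K E w Ω = extContract K E (extContractDual K E v w) Ω :=
  wedge_contract_eq_contract_contract_general v w Ω hΩ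
end

section
/- (Dynkin–Specht–Wever) Let K be a field of characteristic 0, V a K-vector space, H a Lie algebra over K, and σ₁ : V → H a linear map. Define recursively, for n ≥ 2, the linear maps σₙ : V^{⊗n} → H by σₙ(v₁⊗v₂⊗…⊗vₙ) = [σ₁(v₁), σ_{n−1}(v₂⊗…⊗vₙ)]. Let l(V) ⊆ T̄(V) = ⊕_{n≥1} V^{⊗n} be the free Lie algebra generated by V, i.e. the smallest Lie subalgebra of the tensor algebra (with commutator bracket) containing V. Then the linear map σ = Σ_{n≥1} (1/n)·σₙ, restricted to l(V), is a morphism of Lie algebras l(V) → H, and it is the unique Lie algebra homomorphism l(V) → H extending σ₁. In particular (taking H = l(V), σ₁ = inclusion), the map v₁⊗…⊗vₙ ↦ (1/n)[v₁,[v₂,[…,[v_{n−1},vₙ]…]]] is a projection of T̄(V) onto l(V). -/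
attribute [local instance 100] LieRing.ofAssociativeRing

section DSW

variable (K V H : Type*) [Field K] [AddCommGroup V] [Module K V]
  [LieRing H] [LieAlgebra K H]

/-- Auxiliary representation `V → End(H × K)`, `v ↦ ((h,c) ↦ ([σ₁v, h] + c·σ₁v, 0))`,
used to assemble the maps `σₙ(v₁⊗…⊗vₙ) = [σ₁v₁,[…,[σ₁v_{n−1}, σ₁vₙ]…]]` into a single
linear map on the tensor algebra. -/
noncomputable def dswAuxEnd (σ₁ : V →ₗ[K] H) (v : V) : Module.End K (H × K) where
  toFun p := (⁅σ₁ v, p.1⁆ + p.2 • σ₁ v, (0 : K))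
  map_add' p q := by
    apply Prod.ext <;> simp [lie_add, add_smul] <;> abel
  map_smul' c p := by
    apply Prod.ext <;> simp [lie_smul, smul_add, smul_smul]

/-- Auxiliary representation packaged as a linear map. -/
noncomputable def dswAux (σ₁ : V →ₗ[K] H) : V →ₗ[K] Module.End K (H × K) where
  toFun := dswAuxEnd K V H σ₁
  map_add' v w := by
    refine LinearMap.ext fun p => Prod.ext ?_ ?_ <;>
      simp [dswAuxEnd, add_lie, smul_add] <;> abel
  map_smul' c v := by
    refine LinearMap.ext fun p => Prod.ext ?_ ?_ <;>
      simp [dswAuxEnd, smul_lie, smul_add, smul_smul, mul_comm]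

/-- The (unnormalized) Dynkin–Specht–Wever map `Σₙ σₙ : T̄(V) → H`; on a pure tensor
`v₁⊗…⊗vₙ` it takes the value `σₙ(v₁⊗…⊗vₙ) = [σ₁v₁,[σ₁v₂,[…,[σ₁v_{n−1},σ₁vₙ]…]]]`,
and it kills the scalars `⊗⁰V`. -/
noncomputable def dswSigmaRaw (σ₁ : V →ₗ[K] H) : TensorAlgebra K V →ₗ[K] H :=
  LinearMap.fst K H K ∘ₗ
    LinearMap.applyₗ ((0 : H), (1 : K)) ∘ₗ
    (TensorAlgebra.lift K (dswAux K V H σ₁)).toLinearMap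

/-- The free Lie algebra `l(V)` realized as the smallest Lie subalgebra of the tensor
algebra (with commutator bracket) containing `V`. -/
noncomputable def freeLiePart : LieSubalgebra K (TensorAlgebra K V) :=
  LieSubalgebra.lieSpan K (TensorAlgebra K V) (Set.range (TensorAlgebra.ι K))

/-- The degree-`n` graded piece `V^{⊗n}` of the tensor algebra. -/
noncomputable def tensorDeg (n : ℕ) : Submodule K (TensorAlgebra K V) :=
  LinearMap.range (TensorAlgebra.ι K : V →ₗ[K] TensorAlgebra K V) ^ n

theorem ι_mem_freeLiePart (v : V) : TensorAlgebra.ι K v ∈ freeLiePart K V :=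
  LieSubalgebra.subset_lieSpan ⟨v, rfl⟩

-- ### auxiliary development

/-- The adjoint-type representation `ρ : T(V) → End(H)`. -/
noncomputable def dswRho (σ₁ : V →ₗ[K] H) : TensorAlgebra K V →ₐ[K] Module.End K H :=
  TensorAlgebra.lift K ((LieAlgebra.ad K H : H →ₗ⁅K⁆ Module.End K H).toLinearMap ∘ₗ σ₁)

variable {K V H}

theorem dswSigmaRaw_def (σ₁ : V →ₗ[K] H) (x : TensorAlgebra K V) :
    dswSigmaRaw K V H σ₁ x = ((TensorAlgebra.lift K (dswAux K V H σ₁) x) ((0:H), (1:K))).1 :=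
  rfl

theorem dswRho_ι (σ₁ : V →ₗ[K] H) (v : V) (h : H) :
    dswRho K V H σ₁ (TensorAlgebra.ι K v) h = ⁅σ₁ v, h⁆ := by
  rw [dswRho, TensorAlgebra.lift_ι_apply]
  rfl

/-- The fundamental computation describing the lift of `dswAux` completely. -/
theorem dswL_apply (σ₁ : V →ₗ[K] H) (x : TensorAlgebra K V) (h : H) (c : K) :
    (TensorAlgebra.lift K (dswAux K V H σ₁) x) (h, c) =
      (dswRho K V H σ₁ x h + c • dswSigmaRaw K V H σ₁ x,
        TensorAlgebra.algebraMapInv x * c) := by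
  induction x using TensorAlgebra.induction generalizing h c with
  | algebraMap r =>
      simp only [AlgHom.commutes, Module.algebraMap_end_apply, dswSigmaRaw_def,
        Prod.smul_mk, smul_eq_mul, mul_one, mul_zero, smul_zero]
      apply Prod.ext
      · simp [Prod.smul_def, smul_zero]
      · simp [Prod.smul_def, smul_eq_mul, mul_comm]
  | ι v =>
      rw [TensorAlgebra.lift_ι_apply, dswSigmaRaw_def, TensorAlgebra.lift_ι_apply]
      show dswAuxEnd K V H σ₁ v (h, c) = _
      have hε : TensorAlgebra.algebraMapInv (TensorAlgebra.ι K v) = (0 : K) := by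
        simp [TensorAlgebra.algebraMapInv, TensorAlgebra.lift_ι_apply]
      rw [hε, dswRho_ι]
      show (⁅σ₁ v, h⁆ + c • σ₁ v, (0:K)) = _
      have : ((dswAux K V H σ₁ v) ((0:H), (1:K))).1 = σ₁ v := by
        show ⁅σ₁ v, (0:H)⁆ + (1:K) • σ₁ v = σ₁ v
        simp
      rw [this]
      simp [zero_mul]
  | mul a b iha ihb =>
      have hSb : dswSigmaRaw K V H σ₁ b =
          dswRho K V H σ₁ b 0 + (1:K) • dswSigmaRaw K V H σ₁ b := by simp
      have hSab : dswSigmaRaw K V H σ₁ (a * b) =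
          dswRho K V H σ₁ a (dswSigmaRaw K V H σ₁ b)
            + TensorAlgebra.algebraMapInv b • dswSigmaRaw K V H σ₁ a := by
        rw [dswSigmaRaw_def, map_mul, Module.End.mul_apply, ihb, iha]
        simp [dswSigmaRaw_def]
      rw [map_mul, Module.End.mul_apply, ihb, iha, hSab, map_mul]
      apply Prod.ext
      · simp only [map_add, map_smul, smul_add, Module.End.mul_apply, smul_smul]
        rw [mul_comm (TensorAlgebra.algebraMapInv b) c]
        abel
      · simp [mul_assoc]
  | add a b iha ihb =>
      rw [map_add, LinearMap.add_apply, iha, ihb, map_add, map_add]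
      apply Prod.ext
      · simp only [Prod.fst_add, LinearMap.add_apply]
        rw [smul_add]
        abel
      · simp [add_mul]


theorem dswS_algebraMap (σ₁ : V →ₗ[K] H) (r : K) :
    dswSigmaRaw K V H σ₁ (algebraMap K (TensorAlgebra K V) r) = 0 := by
  rw [dswSigmaRaw_def, AlgHom.commutes]
  show ((r • ((0:H),(1:K)))).1 = 0
  simp

theorem dswS_ι (σ₁ : V →ₗ[K] H) (v : V) :
    dswSigmaRaw K V H σ₁ (TensorAlgebra.ι K v) = σ₁ v := by
  rw [dswSigmaRaw_def, TensorAlgebra.lift_ι_apply]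
  show ⁅σ₁ v, (0:H)⁆ + (1:K) • σ₁ v = σ₁ v
  simp

theorem dswS_mul (σ₁ : V →ₗ[K] H) (x y : TensorAlgebra K V) :
    dswSigmaRaw K V H σ₁ (x * y) =
      dswRho K V H σ₁ x (dswSigmaRaw K V H σ₁ y)
        + TensorAlgebra.algebraMapInv y • dswSigmaRaw K V H σ₁ x := by
  rw [dswSigmaRaw_def, map_mul, Module.End.mul_apply, dswL_apply, dswL_apply]
  simp [dswSigmaRaw_def]

theorem dswEps_ι (v : V) :
    TensorAlgebra.algebraMapInv (TensorAlgebra.ι K v) = (0 : K) := by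
  simp [TensorAlgebra.algebraMapInv, TensorAlgebra.lift_ι_apply]

theorem dswEps_of_deg {n : ℕ} (hn : n ≠ 0) {x : TensorAlgebra K V}
    (hx : x ∈ tensorDeg K V n) : TensorAlgebra.algebraMapInv x = (0 : K) := by
  obtain ⟨m, rfl⟩ := Nat.exists_eq_succ_of_ne_zero hn
  rw [tensorDeg, pow_succ] at hx
  refine Submodule.mul_induction_on hx (fun a _ b hb => ?_) (fun a b ha hb => ?_)
  · obtain ⟨v, rfl⟩ := hb
    rw [map_mul, dswEps_ι, mul_zero]
  · rw [map_add, ha, hb, add_zero]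

theorem dswS_bracket (σ₁ : V →ₗ[K] H) {x y : TensorAlgebra K V}
    (hεx : TensorAlgebra.algebraMapInv x = (0:K))
    (hεy : TensorAlgebra.algebraMapInv y = (0:K)) :
    dswSigmaRaw K V H σ₁ ⁅x, y⁆ =
      dswRho K V H σ₁ x (dswSigmaRaw K V H σ₁ y)
        - dswRho K V H σ₁ y (dswSigmaRaw K V H σ₁ x) := by
  rw [Ring.lie_def, map_sub, dswS_mul, dswS_mul, hεx, hεy, zero_smul, zero_smul,
    add_zero, add_zero]

/-- The degree-normalizing operator `D`, acting as `(n : K)⁻¹ • id` on `V^{⊗n}`. -/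
noncomputable def dswD : TensorAlgebra K V →ₗ[K] TensorAlgebra K V :=
  (DirectSum.toModule K ℕ _ fun n =>
      (n : K)⁻¹ •
        (LinearMap.range (TensorAlgebra.ι K : V →ₗ[K] TensorAlgebra K V) ^ n).subtype) ∘ₗ
    (DirectSum.decomposeLinearEquiv
      (LinearMap.range (TensorAlgebra.ι K : V →ₗ[K] TensorAlgebra K V) ^ ·)).toLinearMap

theorem dswD_of_mem {n : ℕ} {x : TensorAlgebra K V} (hx : x ∈ tensorDeg K V n) :
    dswD x = (n : K)⁻¹ • x := by
  have hx' : x ∈ (LinearMap.range (TensorAlgebra.ι K : V →ₗ[K] TensorAlgebra K V) ^ ·) n := hx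
  rw [dswD, LinearMap.comp_apply, LinearEquiv.coe_toLinearMap,
    DirectSum.decomposeLinearEquiv_apply, DirectSum.decompose_of_mem _ hx',
    ← DirectSum.lof_eq_of K, DirectSum.toModule_lof]
  rfl

/-- The normalized DSW map `φ̃ = S ∘ D`. -/
noncomputable def dswPhiT (σ₁ : V →ₗ[K] H) : TensorAlgebra K V →ₗ[K] H :=
  dswSigmaRaw K V H σ₁ ∘ₗ dswD

theorem dswPhiT_of_mem (σ₁ : V →ₗ[K] H) {n : ℕ} {x : TensorAlgebra K V}
    (hx : x ∈ tensorDeg K V n) :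
    dswPhiT σ₁ x = (n : K)⁻¹ • dswSigmaRaw K V H σ₁ x := by
  rw [dswPhiT, LinearMap.comp_apply, dswD_of_mem hx, map_smul]

theorem dswPhiT_ι (σ₁ : V →ₗ[K] H) (v : V) : dswPhiT σ₁ (TensorAlgebra.ι K v) = σ₁ v := by
  have h1 : TensorAlgebra.ι K v ∈ tensorDeg K V 1 := by
    rw [tensorDeg, pow_one]; exact LinearMap.mem_range_self _ v
  rw [dswPhiT_of_mem σ₁ h1, dswS_ι]
  simp

theorem dswS_of_deg [CharZero K] (σ₁ : V →ₗ[K] H) {n : ℕ} {x : TensorAlgebra K V}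
    (hx : x ∈ tensorDeg K V n) :
    dswSigmaRaw K V H σ₁ x = (n : K) • dswPhiT σ₁ x := by
  rcases eq_or_ne n 0 with rfl | hn
  · rw [tensorDeg, pow_zero, Submodule.one_eq_range] at hx
    obtain ⟨r, rfl⟩ := hx
    show dswSigmaRaw K V H σ₁ (algebraMap K (TensorAlgebra K V) r) = _
    rw [dswS_algebraMap, Nat.cast_zero, zero_smul]
  · rw [dswPhiT_of_mem σ₁ hx, smul_smul, mul_inv_cancel₀ (Nat.cast_ne_zero.mpr hn), one_smul]

theorem dswPhiT_algebraMap (σ₁ : V →ₗ[K] H) (r : K) :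
    dswPhiT σ₁ (algebraMap K (TensorAlgebra K V) r) = 0 := by
  have h0 : (algebraMap K (TensorAlgebra K V) r) ∈ tensorDeg K V 0 := by
    rw [tensorDeg, pow_zero, Submodule.one_eq_range]
    exact ⟨r, rfl⟩
  rw [dswPhiT_of_mem σ₁ h0, dswS_algebraMap, smul_zero]

/-- The submodule of elements on which `ρ` acts as `ad ∘ φ̃`. -/
noncomputable def dswW (σ₁ : V →ₗ[K] H) : Submodule K (TensorAlgebra K V) where
  carrier := {x | ∀ h : H, dswRho K V H σ₁ x h = ⁅dswPhiT σ₁ x, h⁆}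
  add_mem' := by
    intro a b ha hb h
    rw [map_add, map_add, LinearMap.add_apply, ha h, hb h, add_lie]
  zero_mem' := by intro h; simp
  smul_mem' := by
    intro c a ha h
    rw [map_smul, map_smul, LinearMap.smul_apply, ha h, smul_lie]

theorem dsw_key [CharZero K] (σ₁ : V →ₗ[K] H) {m n : ℕ} {x y : TensorAlgebra K V}
    (hx : x ∈ tensorDeg K V m) (hxW : x ∈ dswW σ₁)
    (hy : y ∈ tensorDeg K V n) (hyW : y ∈ dswW σ₁) :
    (⁅x, y⁆ ∈ tensorDeg K V (m + n) ∧ ⁅x, y⁆ ∈ dswW σ₁) ∧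
      dswPhiT σ₁ ⁅x, y⁆ = ⁅dswPhiT σ₁ x, dswPhiT σ₁ y⁆ := by
  rcases eq_or_ne m 0 with rfl | hm
  · rw [tensorDeg, pow_zero, Submodule.one_eq_range] at hx
    obtain ⟨r, rfl⟩ := hx
    simp only [Algebra.linearMap_apply] at hxW ⊢
    have hz : ⁅algebraMap K (TensorAlgebra K V) r, y⁆ = 0 := by
      rw [Ring.lie_def, Algebra.commutes, sub_self]
    rw [hz]
    refine ⟨⟨Submodule.zero_mem _, Submodule.zero_mem _⟩, ?_⟩
    rw [map_zero, dswPhiT_algebraMap, zero_lie]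
  rcases eq_or_ne n 0 with rfl | hn
  · rw [tensorDeg, pow_zero, Submodule.one_eq_range] at hy
    obtain ⟨r, rfl⟩ := hy
    simp only [Algebra.linearMap_apply] at hyW ⊢
    have hz : ⁅x, algebraMap K (TensorAlgebra K V) r⁆ = 0 := by
      rw [Ring.lie_def, Algebra.commutes, sub_self]
    rw [hz]
    refine ⟨⟨Submodule.zero_mem _, Submodule.zero_mem _⟩, ?_⟩
    rw [map_zero, dswPhiT_algebraMap, lie_zero]
  have hdeg : ⁅x, y⁆ ∈ tensorDeg K V (m + n) := by
    rw [Ring.lie_def]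
    refine sub_mem ?_ ?_
    · rw [tensorDeg, pow_add]; exact Submodule.mul_mem_mul hx hy
    · rw [tensorDeg, add_comm m n, pow_add]; exact Submodule.mul_mem_mul hy hx
  have hcast : ((m + n : ℕ) : K) ≠ 0 := Nat.cast_ne_zero.mpr (by omega)
  have hS : dswSigmaRaw K V H σ₁ ⁅x, y⁆ =
      ((m + n : ℕ) : K) • ⁅dswPhiT σ₁ x, dswPhiT σ₁ y⁆ := by
    rw [dswS_bracket σ₁ (dswEps_of_deg hm hx) (dswEps_of_deg hn hy),
      dswS_of_deg σ₁ hy, dswS_of_deg σ₁ hx, map_smul, map_smul,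
      hxW, hyW, ← lie_skew (dswPhiT σ₁ y) (dswPhiT σ₁ x), smul_neg, sub_neg_eq_add,
      Nat.cast_add]
    rw [add_smul]
    abel
  have hhom : dswPhiT σ₁ ⁅x, y⁆ = ⁅dswPhiT σ₁ x, dswPhiT σ₁ y⁆ := by
    rw [dswPhiT_of_mem σ₁ hdeg, hS, smul_smul, inv_mul_cancel₀ hcast, one_smul]
  refine ⟨⟨hdeg, fun h => ?_⟩, hhom⟩
  rw [hhom, Ring.lie_def, map_sub, map_mul, map_mul, LinearMap.sub_apply, Module.End.mul_apply,
    Module.End.mul_apply, hxW, hyW, hxW, hyW, lie_lie]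

/-- The graded hull of the free Lie part. -/
noncomputable def dswM (σ₁ : V →ₗ[K] H) : Submodule K (TensorAlgebra K V) :=
  ⨆ n : ℕ, (tensorDeg K V n ⊓ dswW σ₁)

theorem dsw_lie_mem_M [CharZero K] (σ₁ : V →ₗ[K] H) {x y : TensorAlgebra K V}
    (hx : x ∈ dswM σ₁) (hy : y ∈ dswM σ₁) : ⁅x, y⁆ ∈ dswM σ₁ := by
  revert hy
  refine Submodule.iSup_induction (x := x)
    (motive := fun x => ∀ hy : y ∈ dswM σ₁, ⁅x, y⁆ ∈ dswM σ₁) _ hx (fun m x hx' hy => ?_)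
    (fun _ => by rw [zero_lie]; exact Submodule.zero_mem _)
    (fun a b ha hb hy => by rw [add_lie]; exact Submodule.add_mem _ (ha hy) (hb hy))
  refine Submodule.iSup_induction (x := y)
    (motive := fun y => ⁅x, y⁆ ∈ dswM σ₁) _ hy (fun n y hy' => ?_)
    (show ⁅x, (0 : TensorAlgebra K V)⁆ ∈ dswM σ₁ by
      rw [lie_zero]; exact Submodule.zero_mem _)
    (fun a b ha hb =>
      show ⁅x, a + b⁆ ∈ dswM σ₁ by
        rw [lie_add]; exact Submodule.add_mem _ ha hb)
  obtain ⟨⟨hd, hw⟩, _⟩ := dsw_key σ₁ hx'.1 hx'.2 hy'.1 hy'.2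
  exact Submodule.mem_iSup_of_mem (m + n) ⟨hd, hw⟩

theorem dswPhiT_bracket [CharZero K] (σ₁ : V →ₗ[K] H) {x y : TensorAlgebra K V}
    (hx : x ∈ dswM σ₁) (hy : y ∈ dswM σ₁) :
    dswPhiT σ₁ ⁅x, y⁆ = ⁅dswPhiT σ₁ x, dswPhiT σ₁ y⁆ := by
  revert hy
  refine Submodule.iSup_induction (x := x)
    (motive := fun x => ∀ hy : y ∈ dswM σ₁, dswPhiT σ₁ ⁅x, y⁆ = ⁅dswPhiT σ₁ x, dswPhiT σ₁ y⁆)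
    _ hx (fun m x hx' hy => ?_)
    (fun _ => by rw [zero_lie, map_zero, zero_lie])
    (fun a b ha hb hy => by
      rw [add_lie, map_add, map_add, ha hy, hb hy, add_lie])
  refine Submodule.iSup_induction (x := y)
    (motive := fun y => dswPhiT σ₁ ⁅x, y⁆ = ⁅dswPhiT σ₁ x, dswPhiT σ₁ y⁆) _ hy (fun n y hy' => ?_)
    (show dswPhiT σ₁ ⁅x, (0 : TensorAlgebra K V)⁆ = ⁅dswPhiT σ₁ x, dswPhiT σ₁ 0⁆ by
      rw [lie_zero, map_zero, lie_zero])
    (fun a b ha hb =>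
      show dswPhiT σ₁ ⁅x, a + b⁆ = ⁅dswPhiT σ₁ x, dswPhiT σ₁ (a + b)⁆ by
        rw [lie_add, map_add, map_add, ha, hb, lie_add])
  exact (dsw_key σ₁ hx'.1 hx'.2 hy'.1 hy'.2).2

theorem dsw_freeLie_le_M [CharZero K] (σ₁ : V →ₗ[K] H) {x : TensorAlgebra K V}
    (hx : x ∈ freeLiePart K V) : x ∈ dswM σ₁ := by
  let E : LieSubalgebra K (TensorAlgebra K V) :=
    { dswM σ₁ with
      lie_mem' := fun ha hb => dsw_lie_mem_M σ₁ ha hb }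
  have hgen : Set.range (TensorAlgebra.ι K : V →ₗ[K] TensorAlgebra K V) ⊆ E := by
    rintro _ ⟨v, rfl⟩
    refine Submodule.mem_iSup_of_mem 1 ⟨?_, fun h => ?_⟩
    · rw [tensorDeg, pow_one]; exact LinearMap.mem_range_self _ v
    · rw [dswPhiT_ι, dswRho_ι]
  exact LieSubalgebra.lieSpan_le.mpr hgen hx

/-- The constructed Lie algebra morphism `l(V) → H`. -/
noncomputable def dswPhi [CharZero K] (σ₁ : V →ₗ[K] H) : ↥(freeLiePart K V) →ₗ⁅K⁆ H where
  toFun x := dswPhiT σ₁ (x : TensorAlgebra K V)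
  map_add' x y := (dswPhiT σ₁).map_add x.1 y.1
  map_smul' c x := (dswPhiT σ₁).map_smul c x.1
  map_lie' {x y} := by
    show dswPhiT σ₁ ((⁅x, y⁆ : ↥(freeLiePart K V)) : TensorAlgebra K V) = _
    rw [LieSubalgebra.coe_bracket]
    exact dswPhiT_bracket σ₁ (dsw_freeLie_le_M σ₁ x.2) (dsw_freeLie_le_M σ₁ y.2)

theorem dswPhi_ι [CharZero K] (σ₁ : V →ₗ[K] H) (v : V) :
    dswPhi σ₁ ⟨TensorAlgebra.ι K v, ι_mem_freeLiePart K V v⟩ = σ₁ v :=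
  dswPhiT_ι σ₁ v

theorem dsw_unique (σ₁ : V →ₗ[K] H) (φ ψ : ↥(freeLiePart K V) →ₗ⁅K⁆ H)
    (hφ : ∀ v : V, φ ⟨TensorAlgebra.ι K v, ι_mem_freeLiePart K V v⟩ = σ₁ v)
    (hψ : ∀ v : V, ψ ⟨TensorAlgebra.ι K v, ι_mem_freeLiePart K V v⟩ = σ₁ v) :
    φ = ψ := by
  let E : LieSubalgebra K (TensorAlgebra K V) :=
    { carrier := {x | ∃ hx : x ∈ freeLiePart K V, φ ⟨x, hx⟩ = ψ ⟨x, hx⟩},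
      add_mem' := by
        rintro a b ⟨ha, ea⟩ ⟨hb, eb⟩
        refine ⟨add_mem ha hb, ?_⟩
        have : (⟨a + b, add_mem ha hb⟩ : ↥(freeLiePart K V)) = ⟨a, ha⟩ + ⟨b, hb⟩ := rfl
        rw [this, map_add, map_add, ea, eb]
      zero_mem' := by
        refine ⟨zero_mem _, ?_⟩
        have : (⟨0, zero_mem _⟩ : ↥(freeLiePart K V)) = 0 := rfl
        rw [this, map_zero, map_zero]
      smul_mem' := by
        rintro c a ⟨ha, ea⟩
        refine ⟨Submodule.smul_mem _ c ha, ?_⟩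
        have : (⟨c • a, Submodule.smul_mem _ c ha⟩ : ↥(freeLiePart K V)) = c • ⟨a, ha⟩ := rfl
        rw [this, map_smul, map_smul, ea]
      lie_mem' := by
        rintro a b ⟨ha, ea⟩ ⟨hb, eb⟩
        refine ⟨(freeLiePart K V).lie_mem ha hb, ?_⟩
        have : (⟨⁅a, b⁆, (freeLiePart K V).lie_mem ha hb⟩ : ↥(freeLiePart K V)) =
            ⁅(⟨a, ha⟩ : ↥(freeLiePart K V)), ⟨b, hb⟩⁆ := rfl
        rw [this, LieHom.map_lie, LieHom.map_lie, ea, eb] }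
  have hle : freeLiePart K V ≤ E := by
    apply LieSubalgebra.lieSpan_le.mpr
    rintro _ ⟨v, rfl⟩
    exact ⟨ι_mem_freeLiePart K V v, by rw [hφ v, hψ v]⟩
  ext x
  obtain ⟨hx, ex⟩ := hle x.2
  convert ex


theorem dswRho_freeLie (x z : TensorAlgebra K V) (hz : z ∈ freeLiePart K V) :
    dswRho K V (TensorAlgebra K V) (TensorAlgebra.ι K) x z ∈ freeLiePart K V := by
  induction x using TensorAlgebra.induction generalizing z with
  | algebraMap r =>
      rw [AlgHom.commutes, Module.algebraMap_end_apply]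
      exact Submodule.smul_mem _ r hz
  | ι v =>
      rw [dswRho_ι]
      exact (freeLiePart K V).lie_mem (ι_mem_freeLiePart K V v) hz
  | mul a b ha hb =>
      rw [map_mul, Module.End.mul_apply]
      exact ha _ (hb _ hz)
  | add a b ha hb =>
      rw [map_add, LinearMap.add_apply]
      exact add_mem (ha _ hz) (hb _ hz)



end DSW

theorem dynkin_specht_wever' {K V H : Type*} [Field K] [CharZero K]
    [AddCommGroup V] [Module K V] [LieRing H] [LieAlgebra K H] (σ₁ : V →ₗ[K] H) :
    (∃! φ : ↥(freeLiePart K V) →ₗ⁅K⁆ H,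
        ∀ v : V, φ ⟨TensorAlgebra.ι K v, ι_mem_freeLiePart K V v⟩ = σ₁ v) ∧
    (∀ φ : ↥(freeLiePart K V) →ₗ⁅K⁆ H,
        (∀ v : V, φ ⟨TensorAlgebra.ι K v, ι_mem_freeLiePart K V v⟩ = σ₁ v) →
        ∀ (n : ℕ) (x : ↥(freeLiePart K V)), (x : TensorAlgebra K V) ∈ tensorDeg K V n →
          (n : K) • φ x = dswSigmaRaw K V H σ₁ (x : TensorAlgebra K V)) ∧
    (∀ y : TensorAlgebra K V,
        dswSigmaRaw K V (TensorAlgebra K V) (TensorAlgebra.ι K) y ∈ freeLiePart K V) ∧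
    (∀ (n : ℕ) (x : TensorAlgebra K V), x ∈ freeLiePart K V → x ∈ tensorDeg K V n →
        dswSigmaRaw K V (TensorAlgebra K V) (TensorAlgebra.ι K) x = (n : K) • x) := by
  refine ⟨⟨dswPhi σ₁, dswPhi_ι σ₁,
      fun ψ hψ => dsw_unique σ₁ ψ (dswPhi σ₁) hψ (dswPhi_ι σ₁)⟩, ?_, ?_, ?_⟩
  · intro φ hφ n x hx
    have hφ' : φ = dswPhi σ₁ := dsw_unique σ₁ φ (dswPhi σ₁) hφ (dswPhi_ι σ₁)
    subst hφ'
    exact (dswS_of_deg σ₁ hx).symm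
  · intro y
    induction y using TensorAlgebra.induction with
    | algebraMap r => rw [dswS_algebraMap]; exact zero_mem _
    | ι v => rw [dswS_ι]; exact ι_mem_freeLiePart K V v
    | mul a b ha hb =>
        rw [dswS_mul]
        exact add_mem (dswRho_freeLie a _ hb) (Submodule.smul_mem _ _ ha)
    | add a b ha hb => rw [map_add]; exact add_mem ha hb
  · intro n x hfl hdeg
    have hu : (freeLiePart K V).incl =
        dswPhi (K := K) (V := V) (H := TensorAlgebra K V)
          (TensorAlgebra.ι K : V →ₗ[K] TensorAlgebra K V) := by
      refine dsw_unique _ _ _ (fun v => rfl) (dswPhi_ι _)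
    have hx : dswPhiT (TensorAlgebra.ι K : V →ₗ[K] TensorAlgebra K V) x = x := by
      have := congrArg (fun f => f ⟨x, hfl⟩) hu
      exact this.symm
    rw [dswS_of_deg _ hdeg, hx]

/-- **Dynkin–Specht–Wever.**  For a linear map `σ₁ : V → H` into a Lie algebra (char 0):
there is a unique Lie algebra homomorphism `φ : l(V) → H` extending `σ₁`; it is given by
`σ = Σ (1/n) σₙ`, i.e. `n • φ(x) = (Σₘ σₘ)(x)` for `x ∈ l(V)` homogeneous of degree `n`.
In particular (taking `H = l(V)`, `σ₁` the inclusion) the map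
`v₁⊗…⊗vₙ ↦ (1/n)[v₁,[…,[v_{n−1},vₙ]…]]` is a projection of `T̄(V)` onto `l(V)`. -/
theorem dynkin_specht_wever {K V H : Type*} [Field K] [CharZero K]
    [AddCommGroup V] [Module K V] [LieRing H] [LieAlgebra K H] (σ₁ : V →ₗ[K] H) :
    (∃! φ : ↥(freeLiePart K V) →ₗ⁅K⁆ H,
        ∀ v : V, φ ⟨TensorAlgebra.ι K v, ι_mem_freeLiePart K V v⟩ = σ₁ v) ∧
    (∀ φ : ↥(freeLiePart K V) →ₗ⁅K⁆ H,
        (∀ v : V, φ ⟨TensorAlgebra.ι K v, ι_mem_freeLiePart K V v⟩ = σ₁ v) →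
        ∀ (n : ℕ) (x : ↥(freeLiePart K V)), (x : TensorAlgebra K V) ∈ tensorDeg K V n →
          (n : K) • φ x = dswSigmaRaw K V H σ₁ (x : TensorAlgebra K V)) ∧
    (∀ y : TensorAlgebra K V,
        dswSigmaRaw K V (TensorAlgebra K V) (TensorAlgebra.ι K) y ∈ freeLiePart K V) ∧
    (∀ (n : ℕ) (x : TensorAlgebra K V), x ∈ freeLiePart K V → x ∈ tensorDeg K V n →
        dswSigmaRaw K V (TensorAlgebra K V) (TensorAlgebra.ι K) x = (n : K) • x) :=
  dynkin_specht_wever' σ₁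
end
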